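/- arXiv:2101.02276 — 7 statements merged into one kernel-verified Lean document; each statement's English description precedes it below -/
import Mathlib

section
/- Let {A_α}_{α∈Γ} be a local system of a locally finite associative algebra A over a field F. If Γ = Γ₁ ∪ Γ₂ ∪ ... ∪ Γ_r is a finite union of subsets, then for some k with 1 ≤ k ≤ r, the subfamily {A_α}_{α∈Γ_k} is itself a local system of A. -/
/-- `B` is (the underlying submodule of) a subalgebra: closed under multiplication. -/
def IsSubalg {F A : Type*} [Field F] [NonUnitalRing A] [Module F A]
    (B : Submodule F A) : Prop :=
  ∀ x ∈ B, ∀ y ∈ B, x * y ∈ B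

/-- `I` is a two-sided ideal of the subalgebra `B`. -/
def IsIdealIn {F A : Type*} [Field F] [NonUnitalRing A] [Module F A]
    (I B : Submodule F A) : Prop :=
  I ≤ B ∧ ∀ b ∈ B, ∀ x ∈ I, b * x ∈ I ∧ x * b ∈ I

/-- Product of two submodules of a (possibly non-unital) algebra: the span of products. -/
def prodSub {F A : Type*} [Field F] [NonUnitalRing A] [Module F A]
    (M N : Submodule F A) : Submodule F A :=
  Submodule.span F {z : A | ∃ x ∈ M, ∃ y ∈ N, z = x * y}

/-- `pows B i` is the power `B^(i+1)`: `pows B 0 = B`, `pows B (i+1) = B * pows B i`. -/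
def pows {F A : Type*} [Field F] [NonUnitalRing A] [Module F A]
    (B : Submodule F A) : ℕ → Submodule F A
  | 0 => B
  | (i + 1) => prodSub B (pows B i)

/-- A family of finite-dimensional subalgebras is a local system: union is everything
and the family is directed under inclusion. -/
def IsLocalSystem {F A : Type*} [Field F] [NonUnitalRing A] [Module F A] {Γ : Type*}
    (S : Γ → Submodule F A) : Prop :=
  (∀ α, IsSubalg (S α)) ∧ (∀ α, FiniteDimensional F (S α)) ∧
    (∀ x : A, ∃ α, x ∈ S α) ∧ ∀ α β, ∃ γ, S α ≤ S γ ∧ S β ≤ S γ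

/-- Every finite subset is contained in a finite-dimensional subalgebra. -/
def IsLocallyFinite (F A : Type*) [Field F] [NonUnitalRing A] [Module F A] : Prop :=
  ∀ s : Finset A, ∃ B : Submodule F A, IsSubalg B ∧ FiniteDimensional F B ∧ ∀ x ∈ s, x ∈ B

/-- A (possibly non-unital) algebra is simple: `A² ≠ 0` and no nontrivial two-sided ideals. -/
def IsSimpleAlg (F A : Type*) [Field F] [NonUnitalRing A] [Module F A] : Prop :=
  (∃ x y : A, x * y ≠ 0) ∧ ∀ I : Submodule F A, IsIdealIn I ⊤ → I = ⊥ ∨ I = ⊤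

/-- `R` is the radical of the finite-dimensional algebra `B`: its largest nilpotent ideal
(which coincides with the Jacobson radical for finite-dimensional algebras). -/
def IsRadicalOf {F A : Type*} [Field F] [NonUnitalRing A] [Module F A]
    (R B : Submodule F A) : Prop :=
  IsIdealIn R B ∧ (∃ n, pows R n = ⊥) ∧
    ∀ I, IsIdealIn I B → (∃ n, pows I n = ⊥) → I ≤ R

/-- `I` is an ideal of codimension 1 in `B`. -/
def CodimOneIn {F A : Type*} [Field F] [NonUnitalRing A] [Module F A]
    (I B : Submodule F A) : Prop :=
  I ≤ B ∧ I ≠ B ∧ ∃ v : A, B ≤ I ⊔ Submodule.span F {v}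

/-- The algebra `B` is 1-perfect: it has no two-sided ideal of codimension 1. -/
def Is1Perfect {F A : Type*} [Field F] [NonUnitalRing A] [Module F A]
    (B : Submodule F A) : Prop :=
  ¬ ∃ I : Submodule F A, IsIdealIn I B ∧ CodimOneIn I B

/-- `Q` is the largest 1-perfect ideal (the 1-perfect radical) of the algebra `B`. -/
def IsLargest1PerfectIdealIn {F A : Type*} [Field F] [NonUnitalRing A] [Module F A]
    (Q B : Submodule F A) : Prop :=
  IsIdealIn Q B ∧ Is1Perfect Q ∧ ∀ I, IsIdealIn I B → Is1Perfect I → I ≤ Q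

/-- `B` is a simple subalgebra: nonzero products and no nontrivial ideals of itself. -/
def IsSimpleSubalg {F A : Type*} [Field F] [NonUnitalRing A] [Module F A]
    (B : Submodule F A) : Prop :=
  (∃ x ∈ B, ∃ y ∈ B, x * y ≠ 0) ∧ ∀ I : Submodule F A, IsIdealIn I B → I = ⊥ ∨ I = B

theorem sub_local_system_of_finite_cover {F A : Type*} [Field F] [NonUnitalRing A] [Module F A]
    [IsScalarTower F A A] [SMulCommClass F A A]
    (hA : IsLocallyFinite F A) {Γ : Type*} (S : Γ → Submodule F A)
    (hS : IsLocalSystem S) (r : ℕ) (Γs : Fin r → Set Γ)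
    (hcover : ∀ γ : Γ, ∃ i, γ ∈ Γs i) :
    ∃ k : Fin r, IsLocalSystem (fun β : Γs k => S β) := by
  obtain ⟨hsub, hfd, hunion, hdir⟩ := hS
  by_contra h
  push_neg at h
  have hnc : ∀ k : Fin r, ∃ α : Γ, ∀ β ∈ Γs k, ¬ S α ≤ S β := by
    intro k
    by_contra hc
    push_neg at hc
    apply h k
    refine ⟨fun β => hsub β, fun β => hfd β, ?_, ?_⟩
    · intro x
      obtain ⟨α, hα⟩ := hunion x
      obtain ⟨β, hβ, hle⟩ := hc α
      exact ⟨⟨β, hβ⟩, hle hα⟩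
    · intro β1 β2
      obtain ⟨γ, h1, h2⟩ := hdir β1 β2
      obtain ⟨β, hβ, hle⟩ := hc γ
      exact ⟨⟨β, hβ⟩, h1.trans hle, h2.trans hle⟩
  choose f hf using hnc
  obtain ⟨α0, -⟩ := hunion 0
  have key : ∀ n : ℕ, ∀ g : Fin n → Γ, ∃ γ, ∀ i, S (g i) ≤ S γ := by
    intro n
    induction n with
    | zero => exact fun g => ⟨α0, fun i => i.elim0⟩
    | succ n ih =>
      intro g
      obtain ⟨γ, hγ⟩ := ih (fun i => g i.castSucc)
      obtain ⟨δ, h1, h2⟩ := hdir γ (g (Fin.last n))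
      exact ⟨δ, fun i => Fin.lastCases h2 (fun j => (hγ j).trans h1) i⟩
  obtain ⟨γ, hγ⟩ := key r f
  obtain ⟨i, hi⟩ := hcover γ
  exact hf i γ hi (hγ i)
end

section
/- Let A be a simple locally finite associative algebra over a field F, let {A_α}_{α∈Γ} be a local system of A, and let {I_α}_{α∈Γ} be a family with I_α an ideal of A_α for each α. Then either ∩_{α∈Γ} I_α = 0, or for every k ∈ Γ there exists β_k ∈ Γ such that A_k ⊆ I_{β_k}. -/
theorem ideals_inf_bot_or_absorb {F A : Type*} [Field F] [NonUnitalRing A] [Module F A]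
    [IsScalarTower F A A] [SMulCommClass F A A]
    (hsimple : IsSimpleAlg F A) (hlf : IsLocallyFinite F A)
    {Γ : Type*} (S : Γ → Submodule F A) (hS : IsLocalSystem S)
    (I : Γ → Submodule F A) (hI : ∀ α, IsIdealIn (I α) (S α)) :
    (⨅ α, I α) = ⊥ ∨ ∀ k, ∃ β, S k ≤ I β := by
  
  classical
  by_cases hJ : (⨅ α, I α) = ⊥
  · exact Or.inl hJ
  right
  obtain ⟨z, hzJ, hz0⟩ := (Submodule.ne_bot_iff _).mp hJ
  have hzI : ∀ δ, z ∈ I δ := fun δ => (Submodule.mem_iInf _).mp hzJ δ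
  obtain ⟨hsub, hfd, hcov, hdir⟩ := hS
  obtain ⟨γ0, _⟩ := hcov 0
  -- the two-sided ideal of A generated by z
  set G : Set A := {w | (∃ a, w = a * z) ∨ (∃ b, w = z * b) ∨ (∃ a b, w = a * z * b) ∨ w = z}
    with hG
  set T : Submodule F A := Submodule.span F G with hT
  have hmemG : ∀ w ∈ G, w ∈ T := fun w hw => Submodule.subset_span hw
  have hTideal : IsIdealIn T ⊤ := by
    constructor
    · exact le_top
    intro b _ x hx
    induction hx using Submodule.span_induction with
    | mem w hw =>
      rcases hw with ⟨a, rfl⟩ | ⟨c, rfl⟩ | ⟨a, c, rfl⟩ | rfl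
      · constructor
        · have : b * (a * z) = (b * a) * z := by rw [mul_assoc]
          rw [this]; exact hmemG _ (Or.inl ⟨b * a, rfl⟩)
        · exact hmemG _ (Or.inr (Or.inr (Or.inl ⟨a, b, rfl⟩)))
      · constructor
        · have : b * (z * c) = (b * z) * c := by rw [mul_assoc]
          rw [this]; exact hmemG _ (Or.inr (Or.inr (Or.inl ⟨b, c, rfl⟩)))
        · have : (z * c) * b = z * (c * b) := by rw [mul_assoc]
          rw [this]; exact hmemG _ (Or.inr (Or.inl ⟨c * b, rfl⟩))
      · constructor
        · have : b * (a * z * c) = ((b * a) * z) * c := by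
            rw [mul_assoc, mul_assoc, mul_assoc]
          rw [this]; exact hmemG _ (Or.inr (Or.inr (Or.inl ⟨b * a, c, rfl⟩)))
        · have : (a * z * c) * b = (a * z) * (c * b) := by rw [mul_assoc]
          rw [this]; exact hmemG _ (Or.inr (Or.inr (Or.inl ⟨a, c * b, rfl⟩)))
      · constructor
        · exact hmemG _ (Or.inl ⟨b, rfl⟩)
        · exact hmemG _ (Or.inr (Or.inl ⟨b, rfl⟩))
    | zero => simp
    | add x y hx hy ihx ihy =>
      exact ⟨by rw [mul_add]; exact add_mem ihx.1 ihy.1,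
        by rw [add_mul]; exact add_mem ihx.2 ihy.2⟩
    | smul c x hx ih =>
      exact ⟨by rw [mul_smul_comm]; exact Submodule.smul_mem _ _ ih.1,
        by rw [smul_mul_assoc]; exact Submodule.smul_mem _ _ ih.2⟩
  have hTtop : T = ⊤ := by
    rcases hsimple.2 T hTideal with h | h
    · exfalso
      have : z ∈ T := hmemG z (Or.inr (Or.inr (Or.inr rfl)))
      rw [h] at this
      exact hz0 (by simpa using this)
    · exact h
  -- key: every element of T eventually lies in I δ
  have key : ∀ x ∈ T, ∃ γ, ∀ δ, S γ ≤ S δ → x ∈ I δ := by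
    intro x hx
    induction hx using Submodule.span_induction with
    | mem w hw =>
      rcases hw with ⟨a, rfl⟩ | ⟨c, rfl⟩ | ⟨a, c, rfl⟩ | rfl
      · obtain ⟨γ, hγ⟩ := hcov a
        exact ⟨γ, fun δ hδ => ((hI δ).2 a (hδ hγ) z (hzI δ)).1⟩
      · obtain ⟨γ, hγ⟩ := hcov c
        exact ⟨γ, fun δ hδ => ((hI δ).2 c (hδ hγ) z (hzI δ)).2⟩
      · obtain ⟨γ1, hγ1⟩ := hcov a
        obtain ⟨γ2, hγ2⟩ := hcov c
        obtain ⟨γ, h1, h2⟩ := hdir γ1 γ2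
        refine ⟨γ, fun δ hδ => ?_⟩
        have haz : a * z ∈ I δ := ((hI δ).2 a (hδ (h1 hγ1)) z (hzI δ)).1
        exact ((hI δ).2 c (hδ (h2 hγ2)) (a * z) haz).2
      · exact ⟨γ0, fun δ _ => hzI δ⟩
    | zero => exact ⟨γ0, fun δ _ => zero_mem _⟩
    | add x y hx hy ihx ihy =>
      obtain ⟨γ1, h1⟩ := ihx
      obtain ⟨γ2, h2⟩ := ihy
      obtain ⟨γ, hg1, hg2⟩ := hdir γ1 γ2
      exact ⟨γ, fun δ hδ => add_mem (h1 δ (le_trans hg1 hδ)) (h2 δ (le_trans hg2 hδ))⟩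
    | smul c x hx ih =>
      obtain ⟨γ, h⟩ := ih
      exact ⟨γ, fun δ hδ => Submodule.smul_mem _ _ (h δ hδ)⟩
  -- combine over a finite generating set of S k
  intro k
  have hfg : (S k).FG := Module.Finite.iff_fg.mp (hfd k)
  obtain ⟨s, hs⟩ := hfg
  have hfin : ∀ t : Finset A, ∃ γ, ∀ δ, S γ ≤ S δ → ∀ x ∈ t, x ∈ I δ := by
    intro t
    induction t using Finset.induction with
    | empty => exact ⟨γ0, fun δ _ x hx => absurd hx (Finset.notMem_empty x)⟩
    | @insert a t' hnot ih =>
      obtain ⟨γ1, h1⟩ := ih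
      obtain ⟨γ2, h2⟩ := key a (hTtop ▸ Submodule.mem_top)
      obtain ⟨γ, hg1, hg2⟩ := hdir γ1 γ2
      refine ⟨γ, fun δ hδ x hxmem => ?_⟩
      rcases Finset.mem_insert.mp hxmem with rfl | hx'
      · exact h2 δ (le_trans hg2 hδ)
      · exact h1 δ (le_trans hg1 hδ) x hx'
  obtain ⟨γ, hγ⟩ := hfin s
  refine ⟨γ, ?_⟩
  rw [← hs, Submodule.span_le]
  intro x hx
  exact hγ γ le_rfl x hx
end

section
/- Let A be a simple locally finite associative algebra over a field F, let {A_α}_{α∈Γ} be a local system of A, let S be a nonzero finite-dimensional subspace of A, and for β ∈ Γ_S = {β ∈ Γ : S ⊆ A_β} let A_β^S denote the two-sided ideal of A_β generated by S. Then {A_β^S}_{β∈Γ_S} is a local system of A. -/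
theorem generated_ideals_local_system {F A : Type*} [Field F] [NonUnitalRing A] [Module F A]
    [IsScalarTower F A A] [SMulCommClass F A A]
    (hsimple : IsSimpleAlg F A) (hlf : IsLocallyFinite F A)
    {Γ : Type*} (S : Γ → Submodule F A) (hS : IsLocalSystem S)
    (P : Submodule F A) (hPfd : FiniteDimensional F P) (hPne : P ≠ ⊥)
    (J : {β : Γ // P ≤ S β} → Submodule F A)
    (hJ : ∀ β : {β : Γ // P ≤ S β}, IsIdealIn (J β) (S β) ∧ P ≤ J β ∧
      ∀ K, IsIdealIn K (S (β : Γ)) → P ≤ K → J β ≤ K) :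
    IsLocalSystem J := by
  classical
  obtain ⟨hsub, hfd, hcov, hdir⟩ := hS
  -- every finite set of A is contained in some S γ
  have hdirset : ∀ s : Finset A, ∃ γ : Γ, ∀ x ∈ s, x ∈ S γ := by
    intro s
    induction s using Finset.induction with
    | empty =>
      obtain ⟨α, -⟩ := hcov 0
      exact ⟨α, by simp⟩
    | @insert a s _ ih =>
      obtain ⟨γ, hγ⟩ := ih
      obtain ⟨α, hα⟩ := hcov a
      obtain ⟨δ, h1, h2⟩ := hdir α γ
      refine ⟨δ, ?_⟩
      intro x hx
      rcases Finset.mem_insert.mp hx with rfl | hx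
      · exact h1 hα
      · exact h2 (hγ x hx)
  -- P is contained in some S β₀
  have hPle : ∃ β0 : Γ, P ≤ S β0 := by
    have hfg : P.FG := Module.Finite.iff_fg.mp hPfd
    obtain ⟨s, hsp⟩ := hfg
    obtain ⟨γ, hγ⟩ := hdirset s
    refine ⟨γ, ?_⟩
    rw [← hsp, Submodule.span_le]
    intro x hx
    exact hγ x hx
  obtain ⟨β0, hβ0⟩ := hPle
  have hne : Nonempty {β : Γ // P ≤ S β} := ⟨⟨β0, hβ0⟩⟩
  -- monotonicity of J
  have hmono : ∀ (β γ : {β : Γ // P ≤ S β}), S β ≤ S γ → J β ≤ J γ := by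
    intro β γ h
    refine le_trans ((hJ β).2.2 (J γ ⊓ S β.1) ?_ ?_) inf_le_left
    · refine ⟨inf_le_right, ?_⟩
      intro b hb x hx
      obtain ⟨hx1, hx2⟩ := Submodule.mem_inf.mp hx
      obtain ⟨h1, h2⟩ := (hJ γ).1.2 b (h hb) x hx1
      exact ⟨Submodule.mem_inf.mpr ⟨h1, hsub β.1 b hb x hx2⟩,
        Submodule.mem_inf.mpr ⟨h2, hsub β.1 x hx2 b hb⟩⟩
    · exact le_inf (hJ γ).2.1 β.2
  -- directedness of J
  have hdir' : ∀ β γ : {β : Γ // P ≤ S β}, ∃ δ, J β ≤ J δ ∧ J γ ≤ J δ := by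
    intro β γ
    obtain ⟨δ, h1, h2⟩ := hdir β.1 γ.1
    exact ⟨⟨δ, β.2.trans h1⟩, hmono _ _ h1, hmono _ _ h2⟩
  have hDirected : Directed (· ≤ ·) J := fun β γ => hdir' β γ
  -- the union is an ideal of A
  set I : Submodule F A := ⨆ β, J β with hI
  have hmemI : ∀ x : A, x ∈ I ↔ ∃ β, x ∈ J β := by
    intro x
    exact Submodule.mem_iSup_of_directed J hDirected
  have hIdeal : IsIdealIn I (⊤ : Submodule F A) := by
    refine ⟨le_top, ?_⟩
    intro b _ x hx
    obtain ⟨β, hxβ⟩ := (hmemI x).mp hx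
    obtain ⟨α, hb⟩ := hcov b
    obtain ⟨δ, h1, h2⟩ := hdir α β.1
    have hδP : P ≤ S δ := β.2.trans h2
    have hx' : x ∈ J ⟨δ, hδP⟩ := hmono β ⟨δ, hδP⟩ h2 hxβ
    obtain ⟨ha, hb2⟩ := (hJ ⟨δ, hδP⟩).1.2 b (h1 hb) x hx'
    exact ⟨(hmemI _).mpr ⟨⟨δ, hδP⟩, ha⟩, (hmemI _).mpr ⟨⟨δ, hδP⟩, hb2⟩⟩
  have hItop : I = ⊤ := by
    rcases hsimple.2 I hIdeal with h | h
    · exfalso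
      apply hPne
      have hPI : P ≤ I := le_trans (hJ ⟨β0, hβ0⟩).2.1 (le_iSup J ⟨β0, hβ0⟩)
      rw [h] at hPI
      exact le_bot_iff.mp hPI
    · exact h
  refine ⟨?_, ?_, ?_, hdir'⟩
  · intro β x hx y hy
    exact ((hJ β).1.2 x ((hJ β).1.1 hx) y hy).1
  · intro β
    letI := hfd β.1
    exact Submodule.finiteDimensional_of_le (hJ β).1.1
  · intro x
    have : x ∈ I := by rw [hItop]; trivial
    exact (hmemI x).mp this
end

section
/- No simple locally finite associative algebra over a field F can have a local system consisting entirely of residually nilpotent algebras. -/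
section Aux

variable {F A : Type*} [Field F] [NonUnitalRing A] [Module F A]
  [IsScalarTower F A A] [SMulCommClass F A A]

lemma mem_prodSub {M N : Submodule F A} {x y : A} (hx : x ∈ M) (hy : y ∈ N) :
    x * y ∈ prodSub M N :=
  Submodule.subset_span ⟨x, hx, y, hy, rfl⟩

lemma prodSub_le {M N P : Submodule F A}
    (h : ∀ x ∈ M, ∀ y ∈ N, x * y ∈ P) : prodSub M N ≤ P := by
  apply Submodule.span_le.2
  rintro z ⟨x, hx, y, hy, rfl⟩
  exact h x hx y hy

lemma prodSub_mono_right {M N N' : Submodule F A} (h : N ≤ N') :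
    prodSub M N ≤ prodSub M N' :=
  Submodule.span_mono (by rintro z ⟨x, hx, y, hy, rfl⟩; exact ⟨x, hx, y, h hy, rfl⟩)

lemma pows_succ_le {B : Submodule F A} (hB : IsSubalg B) :
    ∀ i, pows B (i + 1) ≤ pows B i
  | 0 => prodSub_le fun x hx y hy => hB x hx y hy
  | (i + 1) => prodSub_mono_right (pows_succ_le hB i)

lemma pows_antitone {B : Submodule F A} (hB : IsSubalg B) : Antitone (pows B) :=
  antitone_nat_of_succ_le (pows_succ_le hB)

lemma pows_le {B : Submodule F A} (hB : IsSubalg B) (i : ℕ) : pows B i ≤ B :=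
  pows_antitone hB (Nat.zero_le i)

lemma mul_mem_pows_succ_left {B : Submodule F A} {b y : A} {i : ℕ}
    (hb : b ∈ B) (hy : y ∈ pows B i) : b * y ∈ pows B (i + 1) :=
  mem_prodSub hb hy

lemma mul_mem_pows_succ_right {B : Submodule F A} :
    ∀ i : ℕ, ∀ x ∈ pows B i, ∀ b ∈ B, x * b ∈ pows B (i + 1) := by
  intro i
  induction i with
  | zero => intro x hx b hb; exact mem_prodSub hx hb
  | succ i ih =>
    intro x hx b hb
    have hle : pows B (i + 1) ≤ (pows B (i + 2)).comap (LinearMap.mulRight F b) := by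
      apply prodSub_le
      intro u hu w hw
      simp only [Submodule.mem_comap, LinearMap.mulRight_apply]
      rw [mul_assoc]
      exact mem_prodSub hu (ih w hw b hb)
    simpa using hle hx

lemma exists_pows_eq_bot {B : Submodule F A} (hB : IsSubalg B)
    (hfd : FiniteDimensional F B) (h : (⨅ i, pows B i) = ⊥) :
    ∃ n, pows B n = ⊥ := by
  haveI : FiniteDimensional F B := hfd
  haveI hfdi : ∀ i, FiniteDimensional F (pows B i) := fun i =>
    Submodule.finiteDimensional_of_le (pows_le hB i)
  have hstab : ∃ n, pows B (n + 1) = pows B n := by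
    by_contra hc
    push_neg at hc
    have hlt : ∀ n, Module.finrank F (pows B (n + 1)) < Module.finrank F (pows B n) := fun n =>
      Submodule.finrank_lt_finrank_of_lt (lt_of_le_of_ne (pows_succ_le hB n) (hc n))
    have key : ∀ n, Module.finrank F (pows B n) + n ≤ Module.finrank F (pows B 0) := by
      intro n
      induction n with
      | zero => simp
      | succ n ih => have := hlt n; omega
    have := key (Module.finrank F (pows B 0) + 1)
    omega
  obtain ⟨n, hn⟩ := hstab
  have hconst : ∀ m, pows B (n + m) = pows B n := by
    intro m
    induction m with
    | zero => rfl
    | succ m ih =>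
      show prodSub B (pows B (n + m)) = _
      rw [ih]
      exact hn
  refine ⟨n, le_antisymm ?_ bot_le⟩
  rw [← h]
  apply le_iInf
  intro i
  rcases le_total i n with hin | hni
  · exact pows_antitone hB hin
  · obtain ⟨m, rfl⟩ := Nat.exists_eq_add_of_le hni
    exact (hconst m).ge

lemma sandwich {V : Set A} {a' x y : A} (h : a' ∈ Submodule.span F V) :
    x * a' * y ∈ Submodule.span F {z : A | ∃ v ∈ V, z = x * v * y} := by
  induction h using Submodule.span_induction with
  | mem v hv => exact Submodule.subset_span ⟨v, hv, rfl⟩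
  | zero => simp only [mul_zero, zero_mul]; exact Submodule.zero_mem _
  | add u w hu hw ihu ihw =>
    rw [mul_add, add_mul]; exact Submodule.add_mem _ ihu ihw
  | smul c u hu ihu =>
    rw [mul_smul_comm, smul_mul_assoc]; exact Submodule.smul_mem _ c ihu

lemma span_isIdeal {G : Set A}
    (hl : ∀ b : A, ∀ z ∈ G, b * z ∈ Submodule.span F G)
    (hr : ∀ b : A, ∀ z ∈ G, z * b ∈ Submodule.span F G) :
    IsIdealIn (Submodule.span F G) (⊤ : Submodule F A) := by
  refine ⟨le_top, ?_⟩
  intro b _ x hx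
  constructor
  · have hle : Submodule.span F G ≤ (Submodule.span F G).comap (LinearMap.mulLeft F b) :=
      Submodule.span_le.2 fun z hz => hl b z hz
    simpa using hle hx
  · have hle : Submodule.span F G ≤ (Submodule.span F G).comap (LinearMap.mulRight F b) :=
      Submodule.span_le.2 fun z hz => hr b z hz
    simpa using hle hx

def tripleAnn (F A : Type*) [Field F] [NonUnitalRing A] [Module F A]
    [IsScalarTower F A A] [SMulCommClass F A A] : Submodule F A where
  carrier := {x : A | ∀ u v : A, u * x * v = 0}
  zero_mem' := by intro u v; simp
  add_mem' := by
    intro x y hx hy u v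
    rw [mul_add, add_mul, hx u v, hy u v, add_zero]
  smul_mem' := by
    intro c x hx u v
    rw [mul_smul_comm, smul_mul_assoc, hx u v, smul_zero]

end Aux

theorem no_residually_nilpotent_local_system {F A : Type*} [Field F] [NonUnitalRing A] [Module F A]
    [IsScalarTower F A A] [SMulCommClass F A A]
    (hsimple : IsSimpleAlg F A) (hlf : IsLocallyFinite F A)
    {Γ : Type*} (S : Γ → Submodule F A) (hS : IsLocalSystem S) :
    ¬ ∀ α, (⨅ i, pows (S α) i) = ⊥ := by
  classical
  intro h
  obtain ⟨hsub, hfd, hcov, hdir⟩ := hS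
  obtain ⟨⟨x0, y0, hxy⟩, hideal⟩ := hsimple
  set a : A := x0 * y0 with ha_def
  have ha : a ≠ 0 := hxy
  -- every finite set lies in one member of the local system
  have hfin : ∀ s : Finset A, ∃ α, ∀ x ∈ s, x ∈ S α := by
    intro s
    induction s using Finset.induction_on with
    | empty =>
      obtain ⟨α, _⟩ := hcov 0
      exact ⟨α, fun x hx => absurd hx (Finset.notMem_empty x)⟩
    | @insert w s hws ih =>
      obtain ⟨α, hα⟩ := ih
      obtain ⟨β, hβ⟩ := hcov w
      obtain ⟨γ, hγ1, hγ2⟩ := hdir α β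
      refine ⟨γ, fun x hx => ?_⟩
      rcases Finset.mem_insert.1 hx with rfl | hx
      · exact hγ2 hβ
      · exact hγ1 (hα x hx)
  -- the ideal spanned by A·a·A
  set G : Set A := {z : A | ∃ x y : A, z = x * a * y} with hG_def
  have hTa : IsIdealIn (Submodule.span F G) ⊤ := by
    apply span_isIdeal
    · rintro b z ⟨x, y, rfl⟩
      exact Submodule.subset_span ⟨b * x, y, by simp [mul_assoc]⟩
    · rintro b z ⟨x, y, rfl⟩
      exact Submodule.subset_span ⟨x, y * b, by simp [mul_assoc]⟩
  rcases hideal _ hTa with hbot | htop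
  · -- degenerate case: A·a·A = 0, leads to a contradiction with simplicity
    have hz : ∀ u v : A, u * a * v = 0 := by
      intro u v
      have hm : u * a * v ∈ Submodule.span F G := Submodule.subset_span ⟨u, v, rfl⟩
      rw [hbot] at hm
      simpa using hm
    have hNid : IsIdealIn (tripleAnn F A) ⊤ := by
      refine ⟨le_top, ?_⟩
      intro b _ x hx
      constructor
      · intro u v
        rw [← mul_assoc]
        exact hx (u * b) v
      · intro u v
        rw [← mul_assoc, mul_assoc]
        exact hx u (b * v)
    rcases hideal _ hNid with hNbot | hNtop
    · have hmem : a ∈ tripleAnn F A := hz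
      rw [hNbot] at hmem
      exact ha (by simpa using hmem)
    · have hAnn : ∀ x u v : A, u * x * v = 0 := by
        intro x u v
        have hx : x ∈ tripleAnn F A := by rw [hNtop]; trivial
        exact hx u v
      set G2 : Set A := {z : A | ∃ u v : A, z = u * v} with hG2_def
      have hI2 : IsIdealIn (Submodule.span F G2) ⊤ := by
        apply span_isIdeal
        · rintro b z ⟨u, v, rfl⟩
          exact Submodule.subset_span ⟨b * u, v, by rw [mul_assoc]⟩
        · rintro b z ⟨u, v, rfl⟩
          exact Submodule.subset_span ⟨u, v * b, by rw [mul_assoc]⟩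
      rcases hideal _ hI2 with h2bot | h2top
      · have hm : x0 * y0 ∈ Submodule.span F G2 := Submodule.subset_span ⟨x0, y0, rfl⟩
        rw [h2bot] at hm
        exact hxy (by simpa using hm)
      · have hy0 : y0 ∈ Submodule.span F G2 := by rw [h2top]; trivial
        have hker : Submodule.span F G2 ≤ LinearMap.ker (LinearMap.mulLeft F x0) := by
          apply Submodule.span_le.2
          rintro z ⟨u, v, rfl⟩
          simp only [SetLike.mem_coe, LinearMap.mem_ker, LinearMap.mulLeft_apply]
          rw [← mul_assoc]
          exact hAnn u x0 v
        have := hker hy0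
        simp only [LinearMap.mem_ker, LinearMap.mulLeft_apply] at this
        exact hxy this
  · -- main case: a ∈ span(A·a·A)
    have haG : a ∈ Submodule.span F G := by rw [htop]; trivial
    rw [Submodule.mem_span_set] at haG
    obtain ⟨c, hsupp, hsum⟩ := haG
    choose fx fy hf using fun (z : A) (hz : z ∈ c.support) => hsupp (Finset.mem_coe.2 hz)
    set t : Finset A :=
      c.support.attach.image (fun z => fx z.1 z.2) ∪
        c.support.attach.image (fun z => fy z.1 z.2) with ht_def
    obtain ⟨α, hα⟩ := hfin t
    set B : Submodule F A := S α with hB_def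
    have hBsub : IsSubalg B := hsub α
    have hfxB : ∀ z (hz : z ∈ c.support), fx z hz ∈ B := by
      intro z hz
      exact hα _ (Finset.mem_union_left _
        (Finset.mem_image.2 ⟨⟨z, hz⟩, Finset.mem_attach _ _, rfl⟩))
    have hfyB : ∀ z (hz : z ∈ c.support), fy z hz ∈ B := by
      intro z hz
      exact hα _ (Finset.mem_union_right _
        (Finset.mem_image.2 ⟨⟨z, hz⟩, Finset.mem_attach _ _, rfl⟩))
    obtain ⟨n, hn⟩ := exists_pows_eq_bot hBsub (hfd α) (h α)
    set W : ℕ → Set A := fun k => {z : A | ∃ x ∈ pows B k, ∃ y ∈ pows B k, z = x * a * y}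
      with hW_def
    have base : a ∈ Submodule.span F (W 0) := by
      have h1 : (↑c.support : Set A) ⊆ W 0 := by
        intro z hz
        have hz' : z ∈ c.support := hz
        exact ⟨fx z hz', hfxB z hz', fy z hz', hfyB z hz', hf z hz'⟩
      exact Submodule.span_mono h1 (Submodule.mem_span_set.2 ⟨c, subset_rfl, hsum⟩)
    have incl : ∀ k, Submodule.span F (W k) ≤ Submodule.span F (W (k + 1)) := by
      intro k
      apply Submodule.span_le.2
      rintro z ⟨x, hx, y, hy, rfl⟩
      have h1 := sandwich (F := F) (x := x) (y := y) base
      refine Submodule.span_le.2 ?_ h1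
      rintro w ⟨v, ⟨x1, hx1, y1, hy1, rfl⟩, rfl⟩
      apply Submodule.subset_span
      exact ⟨x * x1, mul_mem_pows_succ_right k x hx x1 hx1,
        y1 * y, mul_mem_pows_succ_left hy1 hy, by simp [mul_assoc]⟩
    have hak : ∀ k, a ∈ Submodule.span F (W k) := by
      intro k
      induction k with
      | zero => exact base
      | succ k ih => exact incl k ih
    have hWbot : Submodule.span F (W n) ≤ ⊥ := by
      apply Submodule.span_le.2
      rintro z ⟨x, hx, y, hy, rfl⟩
      rw [hn] at hx
      have hx0 : x = 0 := by simpa using hx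
      simp [hx0]
    exact ha (by simpa using hWbot (hak n))
end

section
/- Let A be an associative algebra over a field F. If P and Q are 1-perfect two-sided ideals of A (i.e., neither P nor Q has a two-sided ideal of codimension 1 in itself), then P + Q is a 1-perfect ideal of A. -/
lemma one_perfect_helper {F A : Type*} [Field F] [NonUnitalRing A] [Module F A]
    (P B I : Submodule F A) (v : A) (hP : IsIdealIn P ⊤) (hP1 : Is1Perfect P)
    (hPB : P ≤ B) (hIB : I ≤ B)
    (hImul : ∀ b ∈ B, ∀ x ∈ I, b * x ∈ I ∧ x * b ∈ I)
    (hv : B ≤ I ⊔ Submodule.span F {v}) (hPI : ¬ P ≤ I) : False := by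
  obtain ⟨p0, hp0P, hp0I⟩ := Set.not_subset.mp hPI
  obtain ⟨i0, hi0, y0, hy0, h0⟩ := Submodule.mem_sup.mp (hv (hPB hp0P))
  obtain ⟨c0, rfl⟩ := Submodule.mem_span_singleton.mp hy0
  have hc0 : c0 ≠ 0 := by
    rintro rfl
    exact hp0I (by rw [← h0]; simpa using hi0)
  apply hP1
  refine ⟨P ⊓ I, ⟨inf_le_left, fun b hb x hx => ?_⟩, inf_le_left, ?_, p0, ?_⟩
  · exact ⟨⟨(hP.2 b trivial x hx.1).1, (hImul b (hPB hb) x hx.2).1⟩,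
      ⟨(hP.2 b trivial x hx.1).2, (hImul b (hPB hb) x hx.2).2⟩⟩
  · intro h
    exact hp0I ((h.ge hp0P).2)
  · intro p hp
    obtain ⟨i, hi, y, hy, hpeq⟩ := Submodule.mem_sup.mp (hv (hPB hp))
    obtain ⟨c, rfl⟩ := Submodule.mem_span_singleton.mp hy
    have hveq : (c0 • v : A) = p0 - i0 := by rw [← h0]; abel
    have key : p = (p - (c * c0⁻¹) • p0) + (c * c0⁻¹) • p0 := by abel
    rw [key]
    refine Submodule.add_mem _ (Submodule.mem_sup_left ⟨Submodule.sub_mem _ hp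
      (Submodule.smul_mem _ _ hp0P), ?_⟩)
      (Submodule.mem_sup_right (Submodule.smul_mem _ _ (Submodule.mem_span_singleton_self _)))
    have : p - (c * c0⁻¹) • p0 = i - (c * c0⁻¹) • i0 := by
      have : c • v = (c * c0⁻¹) • (c0 • v) := by
        rw [smul_smul, mul_assoc, inv_mul_cancel₀ hc0, mul_one]
      rw [← hpeq, this, hveq, smul_sub]; abel
    rw [this]
    exact Submodule.sub_mem _ hi (Submodule.smul_mem _ _ hi0)

theorem sum_of_one_perfect_ideals {F A : Type*} [Field F] [NonUnitalRing A] [Module F A]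
    [IsScalarTower F A A] [SMulCommClass F A A]
    (P Q : Submodule F A) (hP : IsIdealIn P ⊤) (hQ : IsIdealIn Q ⊤)
    (hP1 : Is1Perfect P) (hQ1 : Is1Perfect Q) :
    IsIdealIn (P ⊔ Q) ⊤ ∧ Is1Perfect (P ⊔ Q) := by
  refine ⟨⟨le_top, fun b _ x hx => ?_⟩, ?_⟩
  · obtain ⟨p, hp, q, hq, rfl⟩ := Submodule.mem_sup.mp hx
    constructor
    · rw [mul_add]
      exact Submodule.add_mem _ (Submodule.mem_sup_left (hP.2 b trivial p hp).1)
        (Submodule.mem_sup_right (hQ.2 b trivial q hq).1)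
    · rw [add_mul]
      exact Submodule.add_mem _ (Submodule.mem_sup_left (hP.2 b trivial p hp).2)
        (Submodule.mem_sup_right (hQ.2 b trivial q hq).2)
  · rintro ⟨I, ⟨hIle, hImul⟩, _, hIne, v, hv⟩
    by_cases hPI : P ≤ I
    · by_cases hQI : Q ≤ I
      · exact hIne (le_antisymm hIle (sup_le hPI hQI))
      · exact one_perfect_helper Q (P ⊔ Q) I v hQ hQ1 le_sup_right hIle hImul hv hQI
    · exact one_perfect_helper P (P ⊔ Q) I v hP hP1 le_sup_left hIle hImul hv hPI
end

section
/- Let A be an associative algebra over a field F, let P be a 1-perfect two-sided ideal of A, and let C be a 1-perfect two-sided ideal of A/P. Then the full preimage of C in A is a 1-perfect ideal of A. -/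
lemma mem_sup_span_iff {F A : Type*} [Field F] [NonUnitalRing A] [Module F A]
    (M : Submodule F A) (v x : A) :
    x ∈ M ⊔ Submodule.span F {v} ↔ ∃ m ∈ M, ∃ c : F, x = m + c • v := by
  rw [Submodule.mem_sup]
  constructor
  · rintro ⟨m, hm, y, hy, rfl⟩
    rw [Submodule.mem_span_singleton] at hy
    obtain ⟨c, rfl⟩ := hy
    exact ⟨m, hm, c, rfl⟩
  · rintro ⟨m, hm, c, rfl⟩
    exact ⟨m, hm, c • v, Submodule.smul_mem _ _ (Submodule.mem_span_singleton_self v), rfl⟩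

theorem preimage_of_one_perfect_ideal {F A B : Type*} [Field F]
    [NonUnitalRing A] [Module F A] [IsScalarTower F A A] [SMulCommClass F A A]
    [NonUnitalRing B] [Module F B] [IsScalarTower F B B] [SMulCommClass F B B]
    (P : Submodule F A) (hP : IsIdealIn P ⊤) (hP1 : Is1Perfect P)
    (π : A →ₗ[F] B) (hπmul : ∀ x y, π (x * y) = π x * π y)
    (hπsurj : Function.Surjective π) (hker : LinearMap.ker π = P)
    (C : Submodule F B) (hC : IsIdealIn C ⊤) (hC1 : Is1Perfect C) :
    IsIdealIn (C.comap π) ⊤ ∧ Is1Perfect (C.comap π) := by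
  set Q := C.comap π with hQdef
  have hPQ : P ≤ Q := by
    intro p hp
    have : π p = 0 := by rw [← LinearMap.mem_ker, hker]; exact hp
    simp [hQdef, Submodule.mem_comap, this]
  have hQideal : IsIdealIn Q ⊤ := by
    refine ⟨le_top, fun b _ x hx => ?_⟩
    rw [Submodule.mem_comap] at hx
    constructor
    · show π (b * x) ∈ C
      rw [hπmul]; exact (hC.2 (π b) trivial (π x) hx).1
    · show π (x * b) ∈ C
      rw [hπmul]; exact (hC.2 (π b) trivial (π x) hx).2
  refine ⟨hQideal, ?_⟩
  rintro ⟨I, ⟨hIQ, hIid⟩, hIle, hIne, v, hv⟩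
  by_cases hPI : P ≤ I
  · -- map π I is a codim-1 ideal in C, contradiction
    apply hC1
    have hmaple : I.map π ≤ C := Submodule.map_le_iff_le_comap.mpr hIQ
    have hmapne : I.map π ≠ C := by
      intro heq
      apply hIne
      refine le_antisymm hIle (fun q hq => ?_)
      have : π q ∈ I.map π := heq ▸ hq
      obtain ⟨i, hi, hpi⟩ := this
      have : q - i ∈ P := by rw [← hker, LinearMap.mem_ker]; simp [hpi]
      have := hPI this
      simpa using I.add_mem this hi
    refine ⟨I.map π, ⟨hmaple, ?_⟩, hmaple, hmapne, π v, ?_⟩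
    · rintro b hb x ⟨i, hi, rfl⟩
      obtain ⟨a, rfl⟩ := hπsurj b
      have haQ : a ∈ Q := hb
      constructor
      · rw [← hπmul]; exact ⟨a * i, (hIid a haQ i hi).1, rfl⟩
      · rw [← hπmul]; exact ⟨i * a, (hIid a haQ i hi).2, rfl⟩
    · intro c hc
      obtain ⟨q, rfl⟩ := hπsurj c
      have hqQ : q ∈ Q := hc
      obtain ⟨i, hi, a, rfl⟩ := (mem_sup_span_iff I v q).mp (hv hqQ)
      rw [mem_sup_span_iff]
      exact ⟨π i, ⟨i, hi, rfl⟩, a, by simp⟩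
  · -- I ⊓ P is a codim-1 ideal in P, contradiction
    apply hP1
    obtain ⟨p₀, hp₀P, hp₀I⟩ := SetLike.not_le_iff_exists.mp hPI
    obtain ⟨i₀, hi₀, c₀, hc₀eq⟩ := (mem_sup_span_iff I v p₀).mp (hv (hPQ hp₀P))
    have hc₀ : c₀ ≠ 0 := fun h => hp₀I (by rw [hc₀eq, h]; simpa using hi₀)
    refine ⟨I ⊓ P, ⟨inf_le_right, ?_⟩, inf_le_right, ?_, p₀, ?_⟩
    · rintro b hb x ⟨hxI, hxP⟩
      have hbQ : b ∈ Q := hPQ hb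
      exact ⟨⟨(hIid b hbQ x hxI).1, (hP.2 b trivial x hxP).1⟩,
             ⟨(hIid b hbQ x hxI).2, (hP.2 b trivial x hxP).2⟩⟩
    · intro heq
      exact hp₀I (show p₀ ∈ I ⊓ P by rw [heq]; exact hp₀P).1
    · intro p hp
      obtain ⟨i, hi, c, hceq⟩ := (mem_sup_span_iff I v p).mp (hv (hPQ hp))
      rw [mem_sup_span_iff]
      refine ⟨i - (c * c₀⁻¹) • i₀, ⟨I.sub_mem hi (I.smul_mem _ hi₀), ?_⟩, c * c₀⁻¹, ?_⟩
      · have : i - (c * c₀⁻¹) • i₀ = p - (c * c₀⁻¹) • p₀ := by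
          rw [hceq, hc₀eq, smul_add, smul_smul, mul_assoc,
            inv_mul_cancel₀ hc₀, mul_one]
          module
        rw [this]
        exact P.sub_mem hp (P.smul_mem _ hp₀P)
      · rw [hceq, hc₀eq, smul_add, smul_smul, mul_assoc,
          inv_mul_cancel₀ hc₀, mul_one]
        module
end

section
/- Let A be an associative algebra over a field F and let A = A₀ ⊃ A₁ ⊃ ... ⊃ A_r be a maximal chain of subalgebras such that A_{i+1} is a two-sided ideal of A_i and dim(A_i/A_{i+1}) = 1 for all 0 ≤ i ≤ r−1. Then A_r equals the 1-perfect radical 𝒫_A of A. -/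
lemma one_perfect_sq {F A : Type*} [Field F] [NonUnitalRing A] [Module F A]
    (Q : Submodule F A) (hsub : IsSubalg Q) (hp : Is1Perfect Q) :
    prodSub Q Q = Q := by
  have hle : prodSub Q Q ≤ Q := by
    apply Submodule.span_le.2
    rintro z ⟨x, hx, y, hy, rfl⟩
    exact hsub x hx y hy
  by_contra hne
  obtain ⟨v, hvQ, hvP⟩ := SetLike.exists_of_lt (lt_of_le_of_ne hle hne)
  set P := prodSub Q Q with hP
  let P' : Submodule F Q := P.comap Q.subtype
  let π := P'.mkQ
  have hv' : π ⟨v, hvQ⟩ ≠ 0 := by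
    simpa [π, Submodule.Quotient.mk_eq_zero, P'] using hvP
  obtain ⟨N, hN⟩ := Submodule.exists_isCompl (Submodule.span F {π ⟨v, hvQ⟩})
  let M : Submodule F A := (N.comap π).map Q.subtype
  have hMQ : M ≤ Q := by
    rintro x ⟨y, _, rfl⟩; exact y.2
  have hPM : P ≤ M := by
    intro p hp'
    refine ⟨⟨p, hle hp'⟩, ?_, rfl⟩
    have : π ⟨p, hle hp'⟩ = 0 := by
      simpa [π, Submodule.Quotient.mk_eq_zero, P'] using hp'
    simp [this]
  have hvM : v ∉ M := by
    rintro ⟨y, hy, hyv⟩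
    have : y = ⟨v, hvQ⟩ := Subtype.ext hyv
    subst this
    have h1 : π ⟨v, hvQ⟩ ∈ Submodule.span F {π ⟨v, hvQ⟩} := Submodule.mem_span_singleton_self _
    have := hN.inf_eq_bot ▸ (Submodule.mem_inf.2 ⟨h1, hy⟩)
    exact hv' this
  apply hp
  refine ⟨M, ⟨hMQ, ?_⟩, hMQ, ?_, v, ?_⟩
  · intro b hb x hx
    exact ⟨hPM (Submodule.subset_span ⟨b, hb, x, hMQ hx, rfl⟩),
      hPM (Submodule.subset_span ⟨x, hMQ hx, b, hb, rfl⟩)⟩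
  · intro h; exact hvM (h ▸ hvQ)
  · intro x hx
    have : π ⟨x, hx⟩ ∈ Submodule.span F {π ⟨v, hvQ⟩} ⊔ N := by
      rw [hN.sup_eq_top]; trivial
    obtain ⟨s, hs, n, hn, hsn⟩ := Submodule.mem_sup.mp this
    obtain ⟨c, rfl⟩ := Submodule.mem_span_singleton.mp hs
    have hmem : (⟨x, hx⟩ - c • ⟨v, hvQ⟩ : Q) ∈ N.comap π := by
      have : π (⟨x, hx⟩ - c • ⟨v, hvQ⟩) = n := by
        rw [map_sub, map_smul, ← hsn]; abel
      rw [Submodule.mem_comap, this]; exact hn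
    have h1 : x - c • v ∈ M := ⟨_, hmem, rfl⟩
    have : x = (x - c • v) + c • v := by abel
    rw [this]
    exact Submodule.add_mem_sup h1 (Submodule.smul_mem _ _ (Submodule.mem_span_singleton_self v))

lemma ideal_trans {F A : Type*} [Field F] [NonUnitalRing A] [Module F A]
    [IsScalarTower F A A] [SMulCommClass F A A]
    (Q B C : Submodule F A) (hQ : prodSub Q Q = Q)
    (h1 : IsIdealIn Q B) (h2 : IsIdealIn B C) : IsIdealIn Q C := by
  refine ⟨h1.1.trans h2.1, ?_⟩
  intro c hc x hx
  rw [← hQ] at hx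
  induction hx using Submodule.span_induction with
  | mem z hz =>
    obtain ⟨q1, hq1, q2, hq2, rfl⟩ := hz
    constructor
    · rw [← mul_assoc]
      exact (h1.2 _ (h2.2 c hc q1 (h1.1 hq1)).1 q2 hq2).1
    · rw [mul_assoc]
      exact (h1.2 _ (h2.2 c hc q2 (h1.1 hq2)).2 q1 hq1).2
  | zero => simp
  | add a b _ _ ha hb =>
    exact ⟨by rw [mul_add]; exact Q.add_mem ha.1 hb.1,
      by rw [add_mul]; exact Q.add_mem ha.2 hb.2⟩
  | smul a x _ hx =>
    exact ⟨by rw [mul_smul_comm]; exact Q.smul_mem a hx.1,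
      by rw [smul_mul_assoc]; exact Q.smul_mem a hx.2⟩

theorem maximal_codim_one_chain_ends_at_one_perfect_radical {F A : Type*} [Field F] [NonUnitalRing A] [Module F A]
    [IsScalarTower F A A] [SMulCommClass F A A]
    (r : ℕ) (C : Fin (r + 1) → Submodule F A)
    (hC0 : C 0 = ⊤) (hsub : ∀ i, IsSubalg (C i))
    (hchain : ∀ i : Fin r, IsIdealIn (C i.succ) (C i.castSucc) ∧
      CodimOneIn (C i.succ) (C i.castSucc))
    (hmax : Is1Perfect (C (Fin.last r))) :
    IsLargest1PerfectIdealIn (C (Fin.last r)) ⊤ := by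
  set Q := C (Fin.last r) with hQdef
  have hQsq : prodSub Q Q = Q := one_perfect_sq Q (hsub _) hmax
  have hideal : ∀ i, IsIdealIn Q (C i) := by
    intro i
    induction i using Fin.reverseInduction with
    | last => exact ⟨le_refl _, fun b hb x hx => ⟨hsub _ b hb x hx, hsub _ x hx b hb⟩⟩
    | cast i ih => exact ideal_trans Q (C i.succ) (C i.castSucc) hQsq ih (hchain i).1
  refine ⟨by rw [← hC0]; exact hideal 0, hmax, ?_⟩
  intro I hI hIp
  have key : ∀ i, I ≤ C i := by
    intro i
    induction i using Fin.induction with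
    | zero => rw [hC0]; exact le_top
    | succ i ih =>
      by_contra hnot
      apply hIp
      obtain ⟨hle', hne', v, hv⟩ := (hchain i).2
      obtain ⟨w, hwI, hw⟩ := SetLike.not_le_iff_exists.mp hnot
      obtain ⟨y, hy, z, hz, hweq⟩ := Submodule.mem_sup.mp (hv (ih hwI))
      obtain ⟨b, rfl⟩ := Submodule.mem_span_singleton.mp hz
      have hb : b ≠ 0 := by
        rintro rfl
        exact hw (by rw [← hweq]; simpa using hy)
      refine ⟨I ⊓ C i.succ, ⟨inf_le_left, ?_⟩, inf_le_left, ?_, w, ?_⟩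
      · intro c hc x hx
        exact ⟨⟨(hI.2 c trivial x hx.1).1, ((hchain i).1.2 c (ih hc) x hx.2).1⟩,
          ⟨(hI.2 c trivial x hx.1).2, ((hchain i).1.2 c (ih hc) x hx.2).2⟩⟩
      · intro h
        exact hnot (h ▸ inf_le_right)
      · intro x hx
        obtain ⟨y', hy', z', hz', hxeq⟩ := Submodule.mem_sup.mp (hv (ih hx))
        obtain ⟨a, rfl⟩ := Submodule.mem_span_singleton.mp hz'
        set c := a * b⁻¹ with hc
        have hcb : c * b = a := by rw [hc, mul_assoc, inv_mul_cancel₀ hb, mul_one]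
        have hxs : x - c • w ∈ C i.succ := by
          have : x - c • w = y' - c • y := by
            rw [← hxeq, ← hweq, smul_add, smul_smul, hcb]; abel
          rw [this]
          exact Submodule.sub_mem _ hy' (Submodule.smul_mem _ _ hy)
        have hxI : x - c • w ∈ I := Submodule.sub_mem _ hx (Submodule.smul_mem _ _ hwI)
        have : x = (x - c • w) + c • w := by abel
        rw [this]
        exact Submodule.add_mem_sup ⟨hxI, hxs⟩
          (Submodule.smul_mem _ _ (Submodule.mem_span_singleton_self w))
  exact key (Fin.last r)
end
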